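/- arXiv:1203.0464 — 3 statements merged into one kernel-verified Lean document; each statement's English description precedes it below -/
import Mathlib

section
/- For a measurable space E, a bounded measurable potential function G on E with values in (0,1), and a probability measure μ on E with μ(G) > 0, the Boltzmann–Gibbs transform Ψ(μ)(dx) = G(x)μ(dx)/μ(G) can be written as a nonlinear Markov transport equation: Ψ(μ) = μ S_μ, where S_μ(x, dy) := G(x) δ_x(dy) + (1 − G(x)) G(y) μ(dy)/μ(G). That is, for every bounded measurable f, ∫ G(x) f(x) μ(dx)/μ(G) = ∫∫ f(y) S_μ(x, dy) μ(dx). -/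
open MeasureTheory

/-- The Boltzmann–Gibbs transform `Ψ(μ)(dx) = G(x)μ(dx)/μ(G)` can be written as a
nonlinear Markov transport equation `Ψ(μ) = μ S_μ` with
`S_μ(x,dy) = G(x)δ_x(dy) + (1 − G(x)) G(y) μ(dy)/μ(G)`. -/
theorem boltzmann_gibbs_transport
    {E : Type*} [MeasurableSpace E] (μ : Measure E) [IsProbabilityMeasure μ]
    (G : E → ℝ) (hGmeas : Measurable G) (hG : ∀ x, G x ∈ Set.Ioo (0:ℝ) 1)
    (hGpos : 0 < ∫ x, G x ∂μ)
    (f : E → ℝ) (hfmeas : Measurable f) (hfbdd : ∃ C, ∀ x, |f x| ≤ C) :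
    (∫ x, G x * f x ∂μ) / (∫ x, G x ∂μ)
      = ∫ x, (G x * f x
          + (1 - G x) * ((∫ y, G y * f y ∂μ) / (∫ y, G y ∂μ))) ∂μ := by
  obtain ⟨C, hC⟩ := hfbdd
  have hGint : Integrable G μ := by
    refine Integrable.mono' (integrable_const 1) hGmeas.aestronglyMeasurable ?_
    filter_upwards with x
    have := hG x
    rw [Real.norm_eq_abs, abs_of_pos this.1]
    exact this.2.le
  have hGfint : Integrable (fun x => G x * f x) μ := by
    refine Integrable.mono' (integrable_const C) (hGmeas.mul hfmeas).aestronglyMeasurable ?_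
    filter_upwards with x
    have h1 := hG x
    calc ‖G x * f x‖ = |G x| * |f x| := by rw [Real.norm_eq_abs, abs_mul]
      _ ≤ 1 * C := by
          apply mul_le_mul (by rw [abs_of_pos h1.1]; exact h1.2.le) (hC x) (abs_nonneg _)
            zero_le_one
      _ = C := one_mul C
  set c : ℝ := (∫ y, G y * f y ∂μ) / (∫ y, G y ∂μ) with hc
  have hrhs : ∫ x, (G x * f x + (1 - G x) * c) ∂μ
      = (∫ x, G x * f x ∂μ) + (1 - ∫ x, G x ∂μ) * c := by
    have hint2 : Integrable (fun x => (1 - G x) * c) μ := by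
      have := ((integrable_const (1:ℝ)).sub hGint).mul_const c
      simpa using this
    rw [integral_add hGfint hint2,
      integral_mul_const, integral_sub (integrable_const 1) hGint, integral_const]
    simp
  rw [hrhs]
  have hGne : (∫ x, G x ∂μ) ≠ 0 := ne_of_gt hGpos
  have : (∫ x, G x * f x ∂μ) = c * (∫ x, G x ∂μ) := by
    rw [hc, div_mul_cancel₀ _ hGne]
  rw [this]
  ring
end

section
/- Gaussian-moment exponential series bound: if a real random variable Y satisfies E(|Y|^m)^{1/m} ≤ b(2m)² σ₁ for every integer m ≥ 1, where b(2m)^{2m} = (2m)!/(m!2^m), then for every 0 ≤ s < 1/(2σ₁), E(exp(sY)) ≤ 1/√(1 − 2sσ₁). -/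
/-!
Bound `exp (s * Y)` by `exp (s * |Y|)` and integrate the exponential series of the latter term by
term. The moment hypothesis bounds the `m`-th term by `(2m)! / (m!² 2^m) (s σ₁)^m`, which equals
`C(2m, m) / 4^m (2 s σ₁)^m`, the `m`-th term of the binomial series of `(1 - 2 s σ₁)^(-1/2)`.
-/

open MeasureTheory Real
open scoped Nat ENNReal

section CentralBinom

variable {K : Type*} [Field K] [CharZero K]

theorem Nat.cast_centralBinom (m : ℕ) : (m.centralBinom : K) = (2 * m)! / (m ! * m !) := by
  rw [Nat.centralBinom_eq_two_mul_choose, Nat.cast_choose K (by omega),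
    show 2 * m - m = m by omega]

theorem ascPochhammer_eval_one_half_mul_four_pow (n : ℕ) :
    (ascPochhammer K n).eval (1 / 2) * 4 ^ n = n ! * n.centralBinom := by
  induction n with
  | zero => simp
  | succ n ih =>
    have h : ((n + 1 : ℕ) : K) * (n + 1).centralBinom = 2 * (2 * n + 1) * n.centralBinom := by
      exact_mod_cast Nat.succ_mul_centralBinom_succ n
    rw [ascPochhammer_succ_eval, Nat.factorial_succ, pow_succ]
    push_cast at h ⊢
    linear_combination (2 + 4 * (n : K)) * ih - (n ! : K) * h

theorem Ring.multichoose_one_half (n : ℕ) :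
    Ring.multichoose (1 / 2 : K) n = n.centralBinom / 4 ^ n := by
  have hpoch : (n ! : K) * Ring.multichoose (1 / 2 : K) n = (ascPochhammer K n).eval (1 / 2) := by
    rw [← nsmul_eq_mul, Ring.factorial_nsmul_multichoose_eq_ascPochhammer,
      Polynomial.ascPochhammer_smeval_cast, Polynomial.ascPochhammer_smeval_eq_eval]
  rw [eq_div_iff (pow_ne_zero n (by norm_num)),
    ← mul_right_inj' (Nat.cast_ne_zero.2 n.factorial_ne_zero : (n ! : K) ≠ 0), ← mul_assoc,
    hpoch, ascPochhammer_eval_one_half_mul_four_pow]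

end CentralBinom

theorem hasSum_centralBinom_div_four_pow_mul_pow {y : ℝ} (hy : |y| < 1) :
    HasSum (fun n : ℕ => (n.centralBinom / 4 ^ n : ℝ) * y ^ n) (1 / √(1 - y)) := by
  have h := (one_div_one_sub_rpow_hasFPowerSeriesOnBall_zero (1 / 2)).hasSum
    (y := y) (by simpa [enorm_eq_nnnorm, ← NNReal.coe_lt_coe] using hy)
  simpa only [FormalMultilinearSeries.ofScalars_apply_eq, zero_add, smul_eq_mul,
    ← Ring.multichoose_eq, Ring.multichoose_one_half, ← Real.sqrt_eq_rpow] using h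

theorem Real.hasSum_pow_div_factorial_mul_pow (s x : ℝ) :
    HasSum (fun n => s ^ n / n ! * x ^ n) (exp (s * x)) := by
  have h := NormedSpace.expSeries_div_hasSum_exp (s * x)
  rw [← Real.exp_eq_exp_ℝ] at h
  exact h.congr_fun fun n => by ring

theorem le_mul_pow_of_rpow_inv_le {a b c : ℝ} {m : ℕ} (hm : m ≠ 0) (ha : 0 ≤ a) (hb : 0 ≤ b)
    (h : a ^ (m⁻¹ : ℝ) ≤ b ^ (m⁻¹ : ℝ) * c) : a ≤ b * c ^ m :=
  calc a = (a ^ (m⁻¹ : ℝ)) ^ m := (rpow_inv_natCast_pow ha hm).symm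
    _ ≤ (b ^ (m⁻¹ : ℝ) * c) ^ m := pow_le_pow_left₀ (by positivity) h m
    _ = b * c ^ m := by rw [mul_pow, rpow_inv_natCast_pow hb hm]

section MomentSeries

variable {Ω : Type*} [MeasurableSpace Ω] {μ : Measure Ω} {X : Ω → ℝ} {s : ℝ}

theorem hasSum_integral_exp_mul_of_summable_moments (hX : ∀ ω, 0 ≤ X ω) (hs : 0 ≤ s)
    (hint : ∀ n, Integrable (fun ω => X ω ^ n) μ)
    (hsum : Summable fun n => s ^ n / n ! * ∫ ω, X ω ^ n ∂μ) :
    HasSum (fun n => s ^ n / n ! * ∫ ω, X ω ^ n ∂μ) (∫ ω, exp (s * X ω) ∂μ) := by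
  have hterm_nonneg : ∀ n ω, 0 ≤ s ^ n / n ! * X ω ^ n := fun n ω => by
    have := hX ω; positivity
  have h := hasSum_integral_of_summable_integral_norm (fun n => (hint n).const_mul (s ^ n / n !))
    (by simpa only [Real.norm_of_nonneg (hterm_nonneg _ _), integral_const_mul] using hsum)
  simpa only [integral_const_mul, fun ω => (hasSum_pow_div_factorial_mul_pow s (X ω)).tsum_eq]
    using h

theorem integrable_exp_mul_of_summable_moments (hX : ∀ ω, 0 ≤ X ω) (hs : 0 ≤ s)
    (hint : ∀ n, Integrable (fun ω => X ω ^ n) μ)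
    (hsum : Summable fun n => s ^ n / n ! * ∫ ω, X ω ^ n ∂μ) :
    Integrable (fun ω => exp (s * X ω)) μ := by
  have hterm_nonneg : ∀ n ω, 0 ≤ s ^ n / n ! * X ω ^ n := fun n ω => by
    have := hX ω; positivity
  have hmeas : AEStronglyMeasurable X μ := by simpa using (hint 1).aestronglyMeasurable
  refine ⟨continuous_exp.comp_aestronglyMeasurable (hmeas.const_mul s), ?_⟩
  rw [hasFiniteIntegral_iff_ofReal (ae_of_all _ fun ω => (exp_pos _).le)]
  calc ∫⁻ ω, ENNReal.ofReal (exp (s * X ω)) ∂μ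
      = ∫⁻ ω, ∑' n, ENNReal.ofReal (s ^ n / n ! * X ω ^ n) ∂μ := by
        congr with ω
        rw [← (hasSum_pow_div_factorial_mul_pow s (X ω)).tsum_eq,
          ENNReal.ofReal_tsum_of_nonneg (hterm_nonneg · ω)
            (hasSum_pow_div_factorial_mul_pow s (X ω)).summable]
    _ = ∑' n, ENNReal.ofReal (s ^ n / n ! * ∫ ω, X ω ^ n ∂μ) := by
        rw [lintegral_tsum fun n => ((hint n).const_mul _).aemeasurable.ennreal_ofReal]
        congr with n
        rw [← integral_const_mul, ofReal_integral_eq_lintegral_ofReal ((hint n).const_mul _)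
          (ae_of_all _ (hterm_nonneg n))]
    _ = ENNReal.ofReal (∑' n, s ^ n / n ! * ∫ ω, X ω ^ n ∂μ) :=
        (ENNReal.ofReal_tsum_of_nonneg (fun n => mul_nonneg (by positivity)
          (integral_nonneg fun ω => pow_nonneg (hX ω) n)) hsum).symm
    _ < ∞ := ENNReal.ofReal_lt_top

end MomentSeries

theorem exp_moment_from_gaussian_moments_general
    {Ω : Type*} [MeasurableSpace Ω] (μ : Measure Ω) [IsProbabilityMeasure μ]
    (Y : Ω → ℝ) (σ₁ : ℝ)
    (hmomInt : ∀ m : ℕ, Integrable (fun ω => |Y ω| ^ m) μ)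
    (hmom : ∀ m : ℕ, 1 ≤ m →
      (∫ ω, |Y ω| ^ m ∂μ) ^ ((m : ℝ)⁻¹)
        ≤ ((Nat.factorial (2 * m) : ℝ) / (Nat.factorial m * 2 ^ m)) ^ ((m : ℝ)⁻¹) * σ₁) :
    ∀ s : ℝ, 0 ≤ s → s < 1 / (2 * σ₁) →
      ∫ ω, Real.exp (s * Y ω) ∂μ ≤ 1 / Real.sqrt (1 - 2 * s * σ₁) := by
  intro s hs0 hs
  have hσ₁ : 0 < σ₁ := by simpa using hs0.trans_lt hs
  have hx : |2 * s * σ₁| < 1 := by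
    rw [abs_of_nonneg (by positivity)]
    rwa [lt_div_iff₀ (by positivity), ← mul_assoc, mul_comm s] at hs
  have hmoment : ∀ m : ℕ, ∫ ω, |Y ω| ^ m ∂μ ≤ (2 * m)! / (m ! * 2 ^ m) * σ₁ ^ m := by
    rintro (_ | m)
    · simp
    · exact le_mul_pow_of_rpow_inv_le m.succ_ne_zero (integral_nonneg fun ω => by positivity)
        (by positivity) (hmom _ m.succ_pos)
  have hterm : ∀ m : ℕ, s ^ m / m ! * ∫ ω, |Y ω| ^ m ∂μ
      ≤ m.centralBinom / 4 ^ m * (2 * s * σ₁) ^ m := fun m =>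
    calc s ^ m / m ! * ∫ ω, |Y ω| ^ m ∂μ
        ≤ s ^ m / m ! * ((2 * m)! / (m ! * 2 ^ m) * σ₁ ^ m) := by gcongr; exact hmoment m
      _ = m.centralBinom / 4 ^ m * (2 * s * σ₁) ^ m := by
        rw [Nat.cast_centralBinom, mul_pow, mul_pow,
          show (4 : ℝ) ^ m = 2 ^ m * 2 ^ m by rw [← mul_pow]; norm_num]
        field_simp
  have hbinom := hasSum_centralBinom_div_four_pow_mul_pow hx
  have hsum : Summable fun m : ℕ => s ^ m / m ! * ∫ ω, |Y ω| ^ m ∂μ :=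
    hbinom.summable.of_nonneg_of_le (fun m => by positivity) hterm
  have habs := fun ω => abs_nonneg (Y ω)
  calc ∫ ω, exp (s * Y ω) ∂μ ≤ ∫ ω, exp (s * |Y ω|) ∂μ :=
        integral_mono_of_nonneg (ae_of_all _ fun ω => (exp_pos _).le)
          (integrable_exp_mul_of_summable_moments habs hs0 hmomInt hsum)
          (ae_of_all _ fun ω => exp_le_exp.2 (by gcongr; exact le_abs_self _))
    _ ≤ 1 / √(1 - 2 * s * σ₁) :=
        hasSum_le hterm (hasSum_integral_exp_mul_of_summable_moments habs hs0 hmomInt hsum) hbinom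

/-- Gaussian-moment exponential series bound: if `E(|Y|^m)^{1/m} ≤ b(2m)² σ₁` for every
`m ≥ 1`, where `b(2m)^{2m} = (2m)!/(m!2^m)` (so `b(2m)² = ((2m)!/(m!2^m))^{1/m}`), then
for every `0 ≤ s < 1/(2σ₁)`, `E(exp(sY)) ≤ 1/√(1 − 2sσ₁)`. -/
theorem exp_moment_from_gaussian_moments
    {Ω : Type*} [MeasurableSpace Ω] (μ : Measure Ω) [IsProbabilityMeasure μ]
    (Y : Ω → ℝ) (hYmeas : Measurable Y) (σ₁ : ℝ) (hσ₁ : 0 < σ₁)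
    (hmomInt : ∀ m : ℕ, Integrable (fun ω => |Y ω| ^ m) μ)
    (hmom : ∀ m : ℕ, 1 ≤ m →
      (∫ ω, |Y ω| ^ m ∂μ) ^ ((m : ℝ)⁻¹)
        ≤ ((Nat.factorial (2 * m) : ℝ) / (Nat.factorial m * 2 ^ m)) ^ ((m : ℝ)⁻¹) * σ₁)
    (hexpInt : ∀ s : ℝ, 0 ≤ s → s < 1 / (2 * σ₁) →
      Integrable (fun ω => Real.exp (s * Y ω)) μ) :
    ∀ s : ℝ, 0 ≤ s → s < 1 / (2 * σ₁) →
      ∫ ω, Real.exp (s * Y ω) ∂μ ≤ 1 / Real.sqrt (1 - 2 * s * σ₁) :=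
  exp_moment_from_gaussian_moments_general μ Y σ₁ hmomInt hmom
end

section
/- First-order decomposition of the Boltzmann–Gibbs update: for bounded measurable G > 0 on E, probability measures μ, η on E with μ(G), η(G) > 0, and Φ(ν) := Ψ_G(ν) (the G-reweighting of ν), one has for every bounded measurable f: [Φ(μ) − Φ(η)](f) = (μ − η)(D_η f) + R(μ, η)(f), where G_η := G/η(G), D_η(f)(x) := G_η(x)·(f(x) − Φ(η)(f)), and R(μ,η)(f) := −(1/μ(G_η)) (μ−η)(G_η) · (μ−η)(D_η f). -/
open MeasureTheory Real

namespace BoltzmannGibbs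

variable {E : Type*} [MeasurableSpace E] (G : E → ℝ)

/-- The Boltzmann–Gibbs transformation `Ψ_G`, written `Φ`. -/
noncomputable def update (ν : Measure E) (f : E → ℝ) : ℝ :=
  (∫ x, f x * G x ∂ν) / ∫ x, G x ∂ν

noncomputable def normalizedPotential (η : Measure E) (x : E) : ℝ :=
  G x / ∫ y, G y ∂η

/-- `D_η`, the first-order term of `Φ` at `η`. -/
noncomputable def derivative (η : Measure E) (f : E → ℝ) (x : E) : ℝ :=
  normalizedPotential G η x * (f x - update G η f)

noncomputable def remainder (μ η : Measure E) (f : E → ℝ) : ℝ :=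
  -(1 / ∫ x, normalizedPotential G η x ∂μ)
    * ((∫ x, normalizedPotential G η x ∂μ) - ∫ x, normalizedPotential G η x ∂η)
    * ((∫ x, derivative G η f x ∂μ) - ∫ x, derivative G η f x ∂η)

variable {G}

theorem integral_normalizedPotential (ν η : Measure E) :
    ∫ x, normalizedPotential G η x ∂ν = (∫ x, G x ∂ν) / ∫ x, G x ∂η :=
  integral_div _ _

theorem integral_derivative {ν : Measure E} (η : Measure E) (f : E → ℝ)
    (hG : Integrable G ν) (hfG : Integrable (fun x => f x * G x) ν) :
    ∫ x, derivative G η f x ∂ν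
      = ((∫ x, f x * G x ∂ν) - update G η f * ∫ x, G x ∂ν) / ∫ x, G x ∂η := by
  have hpointwise : derivative G η f
      = fun x => (f x * G x - update G η f * G x) / ∫ y, G y ∂η := by
    ext x
    simp only [derivative, normalizedPotential]
    ring
  rw [hpointwise, integral_div, integral_sub hfG (hG.const_mul _), integral_const_mul]

theorem integral_derivative_self {η : Measure E} (f : E → ℝ)
    (hG : Integrable G η) (hfG : Integrable (fun x => f x * G x) η)
    (hηG : ∫ x, G x ∂η ≠ 0) :
    ∫ x, derivative G η f x ∂η = 0 := by
  rw [integral_derivative η f hG hfG, update, div_mul_cancel₀ _ hηG, sub_self, zero_div]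

/-- The point is that `1 − (μ − η)(G_η) / μ(G_η) = 1 / μ(G_η) = η(G) / μ(G)`, which turns
`(μ − η)(D_η f)` into `μ(f G) / μ(G) − η(f G) / η(G)`. -/
theorem update_sub_update {μ η : Measure E} (f : E → ℝ)
    (hGμ : Integrable G μ) (hGη : Integrable G η)
    (hfGμ : Integrable (fun x => f x * G x) μ) (hfGη : Integrable (fun x => f x * G x) η)
    (hμG : ∫ x, G x ∂μ ≠ 0) (hηG : ∫ x, G x ∂η ≠ 0) :
    update G μ f - update G η f
      = ((∫ x, derivative G η f x ∂μ) - ∫ x, derivative G η f x ∂η)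
        + remainder G μ η f := by
  rw [remainder, integral_derivative_self f hGη hfGη hηG, integral_derivative η f hGμ hfGμ,
    integral_normalizedPotential, integral_normalizedPotential, div_self hηG]
  simp only [update]
  field_simp
  ring

end BoltzmannGibbs

theorem boltzmann_gibbs_first_order_decomposition_general
    {E : Type*} [MeasurableSpace E] (μ η : Measure E)
    (G : E → ℝ)
    (hμG : 0 < ∫ x, G x ∂μ) (hηG : 0 < ∫ x, G x ∂η)
    (f : E → ℝ) (hfmeas : Measurable f) (hfbdd : ∃ C, ∀ x, |f x| ≤ C) :
    (∫ x, f x * G x ∂μ) / (∫ x, G x ∂μ) - (∫ x, f x * G x ∂η) / (∫ x, G x ∂η)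
      = ((∫ x, (G x / ∫ y, G y ∂η) *
            (f x - (∫ y, f y * G y ∂η) / (∫ y, G y ∂η)) ∂μ)
          - ∫ x, (G x / ∫ y, G y ∂η) *
            (f x - (∫ y, f y * G y ∂η) / (∫ y, G y ∂η)) ∂η)
        + (-(1 / ∫ x, (G x / ∫ y, G y ∂η) ∂μ)
          * ((∫ x, (G x / ∫ y, G y ∂η) ∂μ) - ∫ x, (G x / ∫ y, G y ∂η) ∂η)
          * ((∫ x, (G x / ∫ y, G y ∂η) *
                (f x - (∫ y, f y * G y ∂η) / (∫ y, G y ∂η)) ∂μ)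
            - ∫ x, (G x / ∫ y, G y ∂η) *
                (f x - (∫ y, f y * G y ∂η) / (∫ y, G y ∂η)) ∂η)) := by
  obtain ⟨C, hC⟩ := hfbdd
  have hGμ : Integrable G μ := .of_integral_ne_zero hμG.ne'
  have hGη : Integrable G η := .of_integral_ne_zero hηG.ne'
  have hfG : ∀ ν : Measure E, Integrable G ν → Integrable (fun x => f x * G x) ν :=
    fun ν hG => hG.bdd_mul hfmeas.aestronglyMeasurable (.of_forall hC)
  exact BoltzmannGibbs.update_sub_update f hGμ hGη (hfG μ hGμ) (hfG η hGη) hμG.ne' hηG.ne'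

/-- First-order decomposition of the Boltzmann–Gibbs update: with
`Φ(ν)(f) = ν(fG)/ν(G)`, `G_η = G/η(G)`, `D_η(f)(x) = G_η(x)(f(x) − Φ(η)(f))` and
`R(μ,η)(f) = −(μ−η)(G_η)·(μ−η)(D_η f)/μ(G_η)`, one has
`[Φ(μ) − Φ(η)](f) = (μ−η)(D_η f) + R(μ,η)(f)`. -/
theorem boltzmann_gibbs_first_order_decomposition
    {E : Type*} [MeasurableSpace E] (μ η : Measure E)
    [IsProbabilityMeasure μ] [IsProbabilityMeasure η]
    (G : E → ℝ) (hGmeas : Measurable G) (hGpos : ∀ x, 0 < G x)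
    (hGbdd : ∃ C, ∀ x, G x ≤ C)
    (hμG : 0 < ∫ x, G x ∂μ) (hηG : 0 < ∫ x, G x ∂η)
    (f : E → ℝ) (hfmeas : Measurable f) (hfbdd : ∃ C, ∀ x, |f x| ≤ C) :
    (∫ x, f x * G x ∂μ) / (∫ x, G x ∂μ) - (∫ x, f x * G x ∂η) / (∫ x, G x ∂η)
      = ((∫ x, (G x / ∫ y, G y ∂η) *
            (f x - (∫ y, f y * G y ∂η) / (∫ y, G y ∂η)) ∂μ)
          - ∫ x, (G x / ∫ y, G y ∂η) *
            (f x - (∫ y, f y * G y ∂η) / (∫ y, G y ∂η)) ∂η)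
        + (-(1 / ∫ x, (G x / ∫ y, G y ∂η) ∂μ)
          * ((∫ x, (G x / ∫ y, G y ∂η) ∂μ) - ∫ x, (G x / ∫ y, G y ∂η) ∂η)
          * ((∫ x, (G x / ∫ y, G y ∂η) *
                (f x - (∫ y, f y * G y ∂η) / (∫ y, G y ∂η)) ∂μ)
            - ∫ x, (G x / ∫ y, G y ∂η) *
                (f x - (∫ y, f y * G y ∂η) / (∫ y, G y ∂η)) ∂η)) :=
  boltzmann_gibbs_first_order_decomposition_general μ η G hμG hηG f hfmeas hfbdd
end
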